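/- arXiv:1709.10183 — 3 statements merged into one kernel-verified Lean document; each statement's English description precedes it below -/
import Mathlib

section
/- For an odd integer n ≥ 3 and x₀ ∈ [0,1], with J = [0,x₀] × [0,1], the sum over i ∈ S(n) of λ²(Qᵢⁿ ∩ J) plus the sum over j ∈ S(n) of λ²(Rⱼⁿ ∩ J) equals (1 − 1/n)·x₀; in particular this sum differs from λ²(J) = x₀ by at most 1/n. -/
open MeasureTheory Set

/-- The parallelogram `conv{(0,b₁),(0,b₁+δ),(1,b₂),(1,b₂+δ)}`. -/
noncomputable def Par (b₁ b₂ δ : ℝ) : Set (ℝ × ℝ) :=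
  convexHull ℝ {(0, b₁), (0, b₁ + δ), (1, b₂), (1, b₂ + δ)}

/-- The index set `S(n) = {0, 2, ..., n² - n - 2}`. -/
def Sn (n : ℕ) : Finset ℕ := (Finset.range (n ^ 2 - n - 1)).filter (fun i => Even i)

/-- The rising parallelogram `Qᵢⁿ`. -/
noncomputable def Q (n i : ℕ) : Set (ℝ × ℝ) :=
  Par ((i : ℝ) / n ^ 2) (((i : ℝ) + n) / n ^ 2) (1 / n ^ 2)

/-- The falling parallelogram `Rⱼⁿ`. -/
noncomputable def R (n j : ℕ) : Set (ℝ × ℝ) :=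
  Par (((j : ℝ) + n) / n ^ 2) ((j : ℝ) / n ^ 2) (1 / n ^ 2)


/-!
The shear `(x, y) ↦ (x, y + c x)` preserves Lebesgue measure and the vertical strips
`[0, x₀] × ℝ`, and maps the rectangle `[0, 1] × [b₁, b₁ + δ]` onto the parallelogram
`P_{b₁, b₁ + c, δ}`. So a parallelogram inside the unit square meets `[0, x₀] × [0, 1]` in the
shear of `[0, x₀] × [b₁, b₁ + δ]`, of area `x₀ δ`. The `2 |S(n)| = n² - n` parallelograms `Qᵢⁿ`,
`Rⱼⁿ` all have height `1 / n²` and lie in the unit square, hence the total is `(1 - 1/n) x₀`.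
-/

open Function

def shear (c : ℝ) : ℝ × ℝ →ₗ[ℝ] ℝ × ℝ :=
  (LinearMap.fst ℝ ℝ ℝ).prod (LinearMap.snd ℝ ℝ ℝ + c • LinearMap.fst ℝ ℝ ℝ)

@[simp]
lemma shear_apply (c : ℝ) (p : ℝ × ℝ) : shear c p = (p.1, p.2 + c * p.1) := rfl

lemma shear_leftInverse (c : ℝ) : LeftInverse (shear (-c)) (shear c) :=
  fun p => by simp

lemma image_shear (c : ℝ) (s : Set (ℝ × ℝ)) : shear c '' s = shear (-c) ⁻¹' s :=
  congrFun (image_eq_preimage_of_inverse (shear_leftInverse c) fun p => by simp) s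

lemma measurePreserving_shear (c : ℝ) : MeasurePreserving (shear c) volume volume := by
  rw [Measure.volume_eq_prod]
  exact (MeasurePreserving.id volume).skew_product (by fun_prop)
    (ae_of_all _ fun a => map_add_right_eq_self volume (c * a))

lemma volume_image_shear (c : ℝ) {s : Set (ℝ × ℝ)} (hs : MeasurableSet s) :
    volume (shear c '' s) = volume s := by
  rw [image_shear]
  exact (measurePreserving_shear (-c)).measure_preimage hs.nullMeasurableSet

lemma preimage_shear_prod_univ (c : ℝ) (t : Set ℝ) :
    shear c ⁻¹' (t ×ˢ univ) = t ×ˢ univ := by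
  ext p
  simp

lemma par_eq_image_shear (b₁ b₂ : ℝ) {δ : ℝ} (hδ : 0 ≤ δ) :
    Par b₁ b₂ δ = shear (b₂ - b₁) '' (Icc 0 1 ×ˢ Icc b₁ (b₁ + δ)) := by
  have hcorners : ({0, 1} : Set ℝ) ×ˢ ({b₁, b₁ + δ} : Set ℝ)
      = {(0, b₁), (0, b₁ + δ), (1, b₁), (1, b₁ + δ)} := by
    ext ⟨x, y⟩
    simp only [mem_prod, mem_insert_iff, mem_singleton_iff, Prod.ext_iff]
    tauto
  rw [← segment_eq_Icc zero_le_one, ← segment_eq_Icc (le_add_of_nonneg_right hδ),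
    ← convexHull_pair, ← convexHull_pair, ← convexHull_prod, hcorners,
    LinearMap.image_convexHull, Par]
  simp only [image_insert_eq, image_singleton, shear_apply]
  ring_nf

lemma par_subset_unitSquare {b₁ b₂ δ : ℝ} (hδ : 0 ≤ δ) (hb₁ : 0 ≤ b₁) (hb₂ : 0 ≤ b₂)
    (hb₁δ : b₁ + δ ≤ 1) (hb₂δ : b₂ + δ ≤ 1) :
    Par b₁ b₂ δ ⊆ Icc 0 1 ×ˢ Icc 0 1 := by
  refine convexHull_min ?_ ((convex_Icc 0 1).prod (convex_Icc 0 1))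
  simp only [insert_subset_iff, singleton_subset_iff, mem_prod, mem_Icc]
  refine ⟨?_, ?_, ?_, ?_⟩ <;> constructor <;> constructor <;> linarith

lemma volume_par_inter_strip {b₁ b₂ δ x₀ : ℝ} (hδ : 0 ≤ δ) (hb₁ : 0 ≤ b₁) (hb₂ : 0 ≤ b₂)
    (hb₁δ : b₁ + δ ≤ 1) (hb₂δ : b₂ + δ ≤ 1) (hx₀ : x₀ ≤ 1) :
    volume (Par b₁ b₂ δ ∩ Icc 0 x₀ ×ˢ Icc 0 1) = ENNReal.ofReal (x₀ * δ) := by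
  have hstrip : Par b₁ b₂ δ ∩ Icc 0 x₀ ×ˢ Icc 0 1 = Par b₁ b₂ δ ∩ Icc 0 x₀ ×ˢ univ := by
    have hsub := par_subset_unitSquare hδ hb₁ hb₂ hb₁δ hb₂δ
    ext p
    constructor
    · rintro ⟨hp, hx, -⟩
      exact ⟨hp, hx, mem_univ _⟩
    · rintro ⟨hp, hx, -⟩
      exact ⟨hp, hx, (hsub hp).2⟩
  have hrect : Icc 0 1 ×ˢ Icc b₁ (b₁ + δ) ∩ Icc 0 x₀ ×ˢ univ = Icc 0 x₀ ×ˢ Icc b₁ (b₁ + δ) := by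
    rw [prod_inter_prod, Icc_inter_Icc, inter_univ, max_self, min_eq_right hx₀]
  rw [hstrip, par_eq_image_shear b₁ b₂ hδ, ← image_inter_preimage, preimage_shear_prod_univ, hrect,
    volume_image_shear _ (measurableSet_Icc.prod measurableSet_Icc), Measure.volume_eq_prod,
    Measure.prod_prod, Real.volume_Icc, Real.volume_Icc, ENNReal.ofReal_mul' hδ]
  ring_nf

lemma volume_par_div_sq_inter_strip {n : ℕ} (hn : 0 < n) {a b x₀ : ℝ} (ha : 0 ≤ a)
    (hb : 0 ≤ b) (ha' : a + 1 ≤ (n : ℝ) ^ 2) (hb' : b + 1 ≤ (n : ℝ) ^ 2) (hx₀ : x₀ ≤ 1) :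
    volume (Par (a / n ^ 2) (b / n ^ 2) (1 / n ^ 2) ∩ Icc 0 x₀ ×ˢ Icc 0 1)
      = ENNReal.ofReal (x₀ / n ^ 2) := by
  have hn2 : (0 : ℝ) < (n : ℝ) ^ 2 := by positivity
  rw [volume_par_inter_strip (by positivity) (by positivity) (by positivity)
    (by rwa [← add_div, div_le_one hn2]) (by rwa [← add_div, div_le_one hn2]) hx₀,
    mul_one_div]

lemma card_filter_even_range (m : ℕ) : ((Finset.range m).filter Even).card = (m + 1) / 2 := by
  induction m with
  | zero => simp
  | succ m ih =>
    rw [Finset.range_add_one, Finset.filter_insert]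
    split_ifs with hm
    · rw [Finset.card_insert_of_notMem (by simp), ih]
      grind
    · rw [ih]
      grind

lemma two_mul_card_Sn (n : ℕ) : 2 * (Sn n).card = n ^ 2 - n := by
  have hn : Even (n ^ 2 - n) := by
    simpa [sq, Nat.mul_sub_one] using Nat.even_mul_pred_self n
  rw [Sn, card_filter_even_range]
  obtain ⟨k, hk⟩ := hn
  omega

lemma add_le_sq_of_mem_Sn {n i : ℕ} (hi : i ∈ Sn n) : (i : ℝ) + n + 1 ≤ (n : ℝ) ^ 2 := by
  have hi' : i < n ^ 2 - n - 1 := (Finset.mem_filter.1 hi).1 |> Finset.mem_range.1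
  have hnn : n ≤ n ^ 2 := Nat.le_self_pow two_ne_zero n
  exact_mod_cast (by omega : i + n + 1 ≤ n ^ 2)

theorem stmt4_general (n : ℕ) (hn3 : 3 ≤ n) (x₀ : ℝ) (hx₀ : x₀ ∈ Icc (0 : ℝ) 1) :
    (∑ i ∈ Sn n, volume (Q n i ∩ Icc (0 : ℝ) x₀ ×ˢ Icc (0 : ℝ) 1) +
        ∑ j ∈ Sn n, volume (R n j ∩ Icc (0 : ℝ) x₀ ×ˢ Icc (0 : ℝ) 1)) =
      ENNReal.ofReal ((1 - 1 / n) * x₀) ∧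
    |(∑ i ∈ Sn n, volume (Q n i ∩ Icc (0 : ℝ) x₀ ×ˢ Icc (0 : ℝ) 1)).toReal +
        (∑ j ∈ Sn n, volume (R n j ∩ Icc (0 : ℝ) x₀ ×ˢ Icc (0 : ℝ) 1)).toReal - x₀| ≤
      1 / n := by
  obtain ⟨hx0, hx1⟩ := hx₀
  have hn : 0 < n := by omega
  have hQ : ∀ i ∈ Sn n, volume (Q n i ∩ Icc 0 x₀ ×ˢ Icc 0 1) = ENNReal.ofReal (x₀ / n ^ 2) :=
    fun i hi => volume_par_div_sq_inter_strip hn (by positivity) (by positivity)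
      (by linarith [add_le_sq_of_mem_Sn hi]) (add_le_sq_of_mem_Sn hi) hx1
  have hR : ∀ j ∈ Sn n, volume (R n j ∩ Icc 0 x₀ ×ˢ Icc 0 1) = ENNReal.ofReal (x₀ / n ^ 2) :=
    fun j hj => volume_par_div_sq_inter_strip hn (by positivity) (by positivity)
      (add_le_sq_of_mem_Sn hj) (by linarith [add_le_sq_of_mem_Sn hj]) hx1
  have hsum : ∑ i ∈ Sn n, volume (Q n i ∩ Icc (0 : ℝ) x₀ ×ˢ Icc (0 : ℝ) 1) +
      ∑ j ∈ Sn n, volume (R n j ∩ Icc (0 : ℝ) x₀ ×ˢ Icc (0 : ℝ) 1) =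
      ENNReal.ofReal ((1 - 1 / n) * x₀) := by
    rw [Finset.sum_eq_card_nsmul hQ, Finset.sum_eq_card_nsmul hR, ← add_nsmul, ← two_mul,
      two_mul_card_Sn, ← ENNReal.ofReal_nsmul, nsmul_eq_mul,
      Nat.cast_sub (Nat.le_self_pow two_ne_zero n)]
    congr 1
    field_simp
    push_cast
    ring
  obtain ⟨hQ_ne_top, hR_ne_top⟩ := ENNReal.add_ne_top.1 (hsum ▸ ENNReal.ofReal_ne_top)
  have hn_inv_le : 1 / (n : ℝ) ≤ 1 := by
    rw [div_le_one (by positivity)]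
    exact_mod_cast hn
  refine ⟨hsum, ?_⟩
  rw [← ENNReal.toReal_add hQ_ne_top hR_ne_top, hsum,
    ENNReal.toReal_ofReal (mul_nonneg (by linarith) hx0),
    show (1 - 1 / (n : ℝ)) * x₀ - x₀ = -(x₀ / n) by ring, abs_neg, abs_of_nonneg (by positivity)]
  gcongr

theorem stmt4 (n : ℕ) (hn3 : 3 ≤ n) (hodd : Odd n) (x₀ : ℝ) (hx₀ : x₀ ∈ Icc (0 : ℝ) 1) :
    (∑ i ∈ Sn n, volume (Q n i ∩ Icc (0 : ℝ) x₀ ×ˢ Icc (0 : ℝ) 1) +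
        ∑ j ∈ Sn n, volume (R n j ∩ Icc (0 : ℝ) x₀ ×ˢ Icc (0 : ℝ) 1)) =
      ENNReal.ofReal ((1 - 1 / n) * x₀) ∧
    |(∑ i ∈ Sn n, volume (Q n i ∩ Icc (0 : ℝ) x₀ ×ˢ Icc (0 : ℝ) 1)).toReal +
        (∑ j ∈ Sn n, volume (R n j ∩ Icc (0 : ℝ) x₀ ×ˢ Icc (0 : ℝ) 1)).toReal - x₀| ≤
      1 / n :=
  stmt4_general n hn3 x₀ hx₀
end

section
/- For an odd integer n ≥ 3 and x₀ ∈ [0,1], with J = [0,x₀] × [0,1], the double sum Σ_{i∈S(n)} Σ_{j∈S(n)} λ²(Qᵢⁿ ∩ Rⱼⁿ ∩ J) lies between (x₀/4)(1 − 3/n + 2/n²) − 1/(4n) and (x₀/4)(1 − 3/(2n) + 3/(4n²)) + 3/n. -/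
open MeasureTheory Set

/-!
Over an abscissa `x`, the vertical sections of `Qᵢⁿ` and `Rⱼⁿ` are intervals of length `1/n²`
whose lower ends differ by `(c + 2nx)/n²`, where `c = i - j - n`; so the section of
`Qᵢⁿ ∩ Rⱼⁿ` has length `hat (c + 2nx) / n²` with `hat t = max 0 (1 - |t|)`. Integrating over
`[0, x₀]` and substituting `t = c + 2nx` gives `(∫ t in c..c + 2nx₀, hat t) / (2n³)`: this is the
full `1/(2n³)` when `[-1, 1] ⊆ [c, c + 2nx₀]`, zero when `[c, c + 2nx₀]` misses `(-1, 1)`,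
and never more than `1/(2n³)`. With `n = 2p + 1`, `i = 2a`, `j = 2b` and `q = ⌊n x₀⌋`, the pair
contributes fully when `0 ≤ b + p - a < q` and not at all unless `0 ≤ b + p - a ≤ q`; counting
these pairs among the `pn` indices of `S(n)` gives both bounds.
-/

noncomputable def parMap (b₁ b₂ δ : ℝ) : ℝ × ℝ →ᵃ[ℝ] ℝ × ℝ :=
  ((LinearMap.fst ℝ ℝ ℝ).prod
      ((b₂ - b₁) • LinearMap.fst ℝ ℝ ℝ + δ • LinearMap.snd ℝ ℝ ℝ)).toAffineMap +
    AffineMap.const ℝ (ℝ × ℝ) (0, b₁)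

lemma parMap_apply (b₁ b₂ δ : ℝ) (p : ℝ × ℝ) :
    parMap b₁ b₂ δ p = (p.1, b₁ + (b₂ - b₁) * p.1 + δ * p.2) := by
  simp [parMap]; ring

lemma Par_eq_image (b₁ b₂ δ : ℝ) : Par b₁ b₂ δ = parMap b₁ b₂ δ '' (Icc 0 1 ×ˢ Icc 0 1) := by
  rw [← segment_eq_Icc zero_le_one, ← convexHull_pair, ← convexHull_prod,
    AffineMap.image_convexHull, Par]
  congr 1
  simp only [insert_prod, singleton_prod, image_insert_eq, image_singleton, parMap_apply]
  ext; simp; tauto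

lemma Par_eq_setOf (b₁ b₂ : ℝ) {δ : ℝ} (hδ : 0 < δ) :
    Par b₁ b₂ δ =
      {p | p.1 ∈ Icc 0 1 ∧ p.2 ∈ Icc (b₁ + (b₂ - b₁) * p.1) (b₁ + (b₂ - b₁) * p.1 + δ)} := by
  rw [Par_eq_image]
  ext ⟨x, y⟩
  simp only [mem_image, mem_prod, Prod.exists, parMap_apply, Prod.mk.injEq, mem_ofPred_eq,
    mem_Icc]
  constructor
  · rintro ⟨s, t, ⟨hs, ht⟩, rfl, rfl⟩
    refine ⟨hs, ?_, ?_⟩ <;> nlinarith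
  · rintro ⟨hx, hy₁, hy₂⟩
    refine ⟨x, (y - (b₁ + (b₂ - b₁) * x)) / δ, ⟨hx, ?_, ?_⟩, rfl, ?_⟩
    · positivity
    · rw [div_le_one hδ]; linarith
    · field_simp; ring

lemma volume_region_between_cc_eq_lintegral {s : Set ℝ} {f g : ℝ → ℝ} (hf : Measurable f)
    (hg : Measurable g) (hs : MeasurableSet s) :
    volume {p : ℝ × ℝ | p.1 ∈ s ∧ p.2 ∈ Icc (f p.1) (g p.1)} =
      ∫⁻ x in s, ENNReal.ofReal (g x - f x) := by
  rw [Measure.volume_eq_prod, Measure.prod_apply (measurableSet_region_between_cc hf hg hs),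
    ← lintegral_indicator hs]
  congr with x
  by_cases hx : x ∈ s
  · rw [indicator_of_mem hx, ← Real.volume_Icc]
    congr with y
    simp [hx]
  · simp [hx]

lemma volume_Par_inter_Par_inter_strip (b₁ b₂ c₁ c₂ : ℝ) {δ x₀ : ℝ} (hδ : 0 < δ)
    (hx₀ : x₀ ≤ 1) :
    volume (Par b₁ b₂ δ ∩ Par c₁ c₂ δ ∩ Icc 0 x₀ ×ˢ univ) =
      ∫⁻ x in Icc 0 x₀, ENNReal.ofReal (δ - |b₁ - c₁ + (b₂ - b₁ - (c₂ - c₁)) * x|) := by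
  set u : ℝ → ℝ := fun x => b₁ + (b₂ - b₁) * x
  set v : ℝ → ℝ := fun x => c₁ + (c₂ - c₁) * x
  have hset : Par b₁ b₂ δ ∩ Par c₁ c₂ δ ∩ Icc 0 x₀ ×ˢ univ =
      {p | p.1 ∈ Icc 0 x₀ ∧ p.2 ∈ Icc (max (u p.1) (v p.1)) (min (u p.1) (v p.1) + δ)} := by
    ext ⟨x, y⟩
    simp only [Par_eq_setOf _ _ hδ, mem_inter_iff, mem_ofPred_eq, mem_prod, mem_Icc, mem_univ,
      max_le_iff, ← min_add_add_right, le_min_iff, u, v]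
    have : x ≤ x₀ → x ≤ 1 := fun h => h.trans hx₀
    tauto
  rw [hset]
  refine (volume_region_between_cc_eq_lintegral (f := fun x => max (u x) (v x))
    (g := fun x => min (u x) (v x) + δ) (by fun_prop) (by fun_prop) measurableSet_Icc).trans ?_
  congr with x
  have huv : b₁ - c₁ + (b₂ - b₁ - (c₂ - c₁)) * x = u x - v x := by ring
  rw [huv, ← max_sub_min_eq_abs']
  congr 1
  ring

noncomputable def hat (t : ℝ) : ℝ := max 0 (1 - |t|)

lemma hat_nonneg (t : ℝ) : 0 ≤ hat t := le_max_left _ _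

@[fun_prop]
lemma continuous_hat : Continuous hat := by unfold hat; fun_prop

lemma hat_eq_zero {t : ℝ} (ht : 1 ≤ |t|) : hat t = 0 := max_eq_left (by linarith)

lemma hat_eq_zero_of_notMem_Icc {t : ℝ} (ht : t ∉ Icc (-1) 1) : hat t = 0 :=
  hat_eq_zero (not_le.1 (mt abs_le.1 ht)).le

lemma integrable_hat : Integrable hat :=
  continuous_hat.integrable_of_hasCompactSupport
    (HasCompactSupport.intro isCompact_Icc fun _ => hat_eq_zero_of_notMem_Icc)

lemma setIntegral_hat_of_subset {s : Set ℝ} (hs : Icc (-1) 1 ⊆ s) :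
    ∫ t in s, hat t = ∫ t, hat t :=
  setIntegral_eq_integral_of_forall_compl_eq_zero fun _ ht =>
    hat_eq_zero_of_notMem_Icc fun h => ht (hs h)

lemma integral_hat : ∫ t, hat t = 1 := by
  rw [← setIntegral_hat_of_subset subset_rfl, integral_Icc_eq_integral_Ioc,
    ← intervalIntegral.integral_of_le (by norm_num),
    ← intervalIntegral.integral_add_adjacent_intervals (b := 0)
      (continuous_hat.intervalIntegrable _ _) (continuous_hat.intervalIntegrable _ _)]
  have h₁ : ∫ t in (-1 : ℝ)..0, hat t = ∫ t in (-1 : ℝ)..0, (1 + t) := by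
    refine intervalIntegral.integral_congr fun t ht => ?_
    rw [uIcc_of_le (by norm_num)] at ht
    rw [hat, abs_of_nonpos ht.2, max_eq_right (by linarith [ht.1])]; ring
  have h₂ : ∫ t in (0 : ℝ)..1, hat t = ∫ t in (0 : ℝ)..1, (1 - t) := by
    refine intervalIntegral.integral_congr fun t ht => ?_
    rw [uIcc_of_le (by norm_num)] at ht
    rw [hat, abs_of_nonneg ht.1, max_eq_right (by linarith [ht.2])]
  rw [h₁, h₂, intervalIntegral.integral_add (by simp) (by simp),
    intervalIntegral.integral_sub (by simp) (by simp)]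
  norm_num [integral_id]

section IntervalIntegral

variable {a b : ℝ}

lemma intervalIntegral_hat_eq_setIntegral (hab : a ≤ b) :
    ∫ t in a..b, hat t = ∫ t in Icc a b, hat t := by
  rw [intervalIntegral.integral_of_le hab, integral_Icc_eq_integral_Ioc]

lemma intervalIntegral_hat_le_one (hab : a ≤ b) : ∫ t in a..b, hat t ≤ 1 := by
  rw [intervalIntegral_hat_eq_setIntegral hab, ← integral_hat]
  exact setIntegral_le_integral integrable_hat (Filter.Eventually.of_forall hat_nonneg)

lemma intervalIntegral_hat_eq_one (ha : a ≤ -1) (hb : 1 ≤ b) : ∫ t in a..b, hat t = 1 := by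
  rw [intervalIntegral_hat_eq_setIntegral (by linarith),
    setIntegral_hat_of_subset (Icc_subset_Icc ha hb), integral_hat]

lemma intervalIntegral_hat_eq_zero (hab : a ≤ b) (h : 1 ≤ a ∨ b ≤ -1) :
    ∫ t in a..b, hat t = 0 := by
  rw [intervalIntegral_hat_eq_setIntegral hab]
  refine setIntegral_eq_zero_of_forall_eq_zero fun t ht => hat_eq_zero ?_
  rcases h with h | h
  · exact h.trans (ht.1.trans (le_abs_self t))
  · exact (by linarith [ht.2] : 1 ≤ -t).trans (neg_le_abs t)

end IntervalIntegral

lemma sum_range_sum_range_le {F : ℕ → ℕ → ℝ} {N p q : ℕ} {m : ℝ} (hm : 0 ≤ m)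
    (hle : ∀ a < N, ∀ b < N, F a b ≤ m)
    (hzero : ∀ a < N, ∀ b < N, b + p < a ∨ a + q < b + p → F a b = 0) :
    ∑ a ∈ Finset.range N, ∑ b ∈ Finset.range N, F a b ≤ N * ((q + 1) * m) := by
  have hrow : ∀ a ∈ Finset.range N, ∑ b ∈ Finset.range N, F a b ≤ (q + 1) * m := by
    intro a ha
    rw [Finset.mem_range] at ha
    set S := {b ∈ Finset.range N | a ≤ b + p ∧ b + p ≤ a + q} with hS
    have hcard : (S.card : ℝ) ≤ q + 1 := by
      have hsub : S ⊆ Finset.Icc (a - p) (a + q - p) := fun b hb => by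
        simp only [hS, Finset.mem_filter, Finset.mem_Icc] at hb ⊢; omega
      exact_mod_cast ((Finset.card_le_card hsub).trans_eq (Nat.card_Icc _ _)).trans (by omega)
    have hsum : ∑ b ∈ Finset.range N, F a b = ∑ b ∈ S, F a b := by
      refine (Finset.sum_filter_of_ne fun b hb hF => ?_).symm
      by_contra h
      rw [not_and_or, not_le, not_le] at h
      exact hF (hzero a ha b (Finset.mem_range.1 hb) h)
    rw [hsum]
    refine (Finset.sum_le_card_nsmul _ _ m fun b hb => ?_).trans ?_
    · simp only [hS, Finset.mem_filter, Finset.mem_range] at hb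
      exact hle a ha b hb.1
    · rw [nsmul_eq_mul]; exact mul_le_mul_of_nonneg_right hcard hm
  exact (Finset.sum_le_card_nsmul _ _ _ hrow).trans_eq (by simp)

lemma le_sum_range_sum_range {F : ℕ → ℕ → ℝ} {N p q A : ℕ} {m : ℝ}
    (hnonneg : ∀ a < N, ∀ b < N, 0 ≤ F a b)
    (hfull : ∀ a < N, ∀ b < N, a ≤ b + p → b + p < a + q → F a b = m)
    (hpA : p + A ≤ N) (hAq : A + q ≤ N + 1) :
    A * (q * m) ≤ ∑ a ∈ Finset.range N, ∑ b ∈ Finset.range N, F a b := by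
  calc (A : ℝ) * (q * m) =
        ∑ a ∈ Finset.Ico p (p + A), ∑ b ∈ Finset.Ico (a - p) (a - p + q), m := by simp
    _ = ∑ a ∈ Finset.Ico p (p + A), ∑ b ∈ Finset.Ico (a - p) (a - p + q), F a b := by
        refine Finset.sum_congr rfl fun a ha => Finset.sum_congr rfl fun b hb => ?_
        simp only [Finset.mem_Ico] at ha hb
        exact (hfull a (by omega) b (by omega) (by omega) (by omega)).symm
    _ ≤ ∑ a ∈ Finset.Ico p (p + A), ∑ b ∈ Finset.range N, F a b := by
        refine Finset.sum_le_sum fun a ha => Finset.sum_le_sum_of_subset_of_nonneg ?_ ?_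
        · intro b hb; simp only [Finset.mem_Ico, Finset.mem_range] at ha hb ⊢; omega
        · intro b hb _; simp only [Finset.mem_Ico, Finset.mem_range] at ha hb
          exact hnonneg a (by omega) b hb
    _ ≤ ∑ a ∈ Finset.range N, ∑ b ∈ Finset.range N, F a b := by
        refine Finset.sum_le_sum_of_subset_of_nonneg ?_ fun a ha _ => ?_
        · intro a ha; simp only [Finset.mem_Ico, Finset.mem_range] at ha ⊢; omega
        · exact Finset.sum_nonneg fun b hb =>
            hnonneg a (Finset.mem_range.1 ha) b (Finset.mem_range.1 hb)

noncomputable def overlapArea (n : ℕ) (x₀ : ℝ) (i j : ℕ) : ℝ :=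
  (volume (Q n i ∩ R n j ∩ Icc (0 : ℝ) x₀ ×ˢ Icc (0 : ℝ) 1)).toReal

lemma Q_subset_univ_prod_Icc {n i : ℕ} (hi : i + n + 1 ≤ n ^ 2) : Q n i ⊆ univ ×ˢ Icc 0 1 := by
  have hn : (0 : ℝ) < n := Nat.cast_pos.2 (Nat.pos_of_ne_zero fun h => by simp [h] at hi)
  have hi' : (i : ℝ) + n + 1 ≤ n ^ 2 := by exact_mod_cast hi
  intro p hp
  rw [Q, Par_eq_setOf _ _ (by positivity)] at hp
  obtain ⟨⟨hx₀, hx₁⟩, hy₀, hy₁⟩ := hp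
  have hslope : ((i : ℝ) + n) / n ^ 2 - i / n ^ 2 = 1 / n := by field_simp; ring
  rw [hslope] at hy₀ hy₁
  refine ⟨mem_univ _, le_trans (by positivity) hy₀, hy₁.trans ?_⟩
  calc (i : ℝ) / n ^ 2 + 1 / n * p.1 + 1 / n ^ 2 ≤ i / n ^ 2 + 1 / n * 1 + 1 / n ^ 2 := by
        gcongr
    _ = ((i : ℝ) + n + 1) / n ^ 2 := by field_simp
    _ ≤ 1 := (div_le_one (by positivity)).2 hi'

lemma overlapArea_eq {n i : ℕ} (j : ℕ) (hi : i + n + 1 ≤ n ^ 2) {x₀ : ℝ}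
    (hx₀ : x₀ ∈ Icc (0 : ℝ) 1) :
    overlapArea n x₀ i j =
      (∫ t in (i - j - n : ℝ)..(i - j - n + 2 * n * x₀), hat t) / (2 * n ^ 3) := by
  have hn : (0 : ℝ) < n := Nat.cast_pos.2 (Nat.pos_of_ne_zero fun h => by simp [h] at hi)
  set c : ℝ := i - j - n
  have hstrip :
      Q n i ∩ R n j ∩ Icc 0 x₀ ×ˢ Icc 0 1 = Q n i ∩ R n j ∩ Icc 0 x₀ ×ˢ univ := by
    ext p
    simp only [mem_inter_iff, mem_prod, mem_univ, and_true]
    exact ⟨fun h => ⟨h.1, h.2.1⟩, fun h => ⟨h.1, h.2, (Q_subset_univ_prod_Icc hi h.1.1).2⟩⟩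
  have hoffset : ∀ x : ℝ, (i : ℝ) / n ^ 2 - (j + n) / n ^ 2 +
      ((i + n) / n ^ 2 - i / n ^ 2 - (j / n ^ 2 - (j + n) / n ^ 2)) * x =
        (2 * n * x + c) / n ^ 2 := fun x => by field_simp; ring
  have hslice : ∀ y : ℝ,
      ENNReal.ofReal (1 / n ^ 2 - |y / n ^ 2|) = ENNReal.ofReal (hat y / n ^ 2) := fun y => by
    rw [hat, ← max_div_div_right (by positivity), zero_div, ENNReal.ofReal_max,
      ENNReal.ofReal_zero, max_eq_right (by positivity), abs_div,
      abs_of_pos (by positivity : (0 : ℝ) < n ^ 2), sub_div]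
  rw [overlapArea, hstrip, Q, R, volume_Par_inter_Par_inter_strip _ _ _ _ (by positivity) hx₀.2]
  simp only [hoffset, hslice]
  rw [← integral_eq_lintegral_of_nonneg_ae (Filter.Eventually.of_forall fun x => by
      positivity [hat_nonneg (2 * n * x + c)]) (by fun_prop),
    integral_Icc_eq_integral_Ioc, ← intervalIntegral.integral_of_le hx₀.1,
    intervalIntegral.integral_div, intervalIntegral.integral_comp_mul_add _ (by positivity),
    mul_zero, zero_add, add_comm _ c, smul_eq_mul]
  field_simp

section Odd

variable {n p a : ℕ}

lemma Sn_eq_image (hn : n = 2 * p + 1) : Sn n = (Finset.range (p * n)).image (2 * ·) := by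
  have hsq : n ^ 2 = 2 * (p * n) + n := by subst hn; ring
  ext k
  simp only [Sn, Finset.mem_filter, Finset.mem_range, Finset.mem_image, Nat.even_iff]
  constructor
  · rintro ⟨hk, hk2⟩
    exact ⟨k / 2, by omega, by omega⟩
  · rintro ⟨a, ha, rfl⟩
    omega

lemma sum_Sn_eq {M : Type*} [AddCommMonoid M] (hn : n = 2 * p + 1) (f : ℕ → M) :
    ∑ i ∈ Sn n, f i = ∑ a ∈ Finset.range (p * n), f (2 * a) := by
  rw [Sn_eq_image hn, Finset.sum_image fun x _ y _ h => by omega]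

lemma overlapArea_two_mul (hn : n = 2 * p + 1) (ha : a < p * n) (b : ℕ) {x₀ : ℝ}
    (hx₀ : x₀ ∈ Icc (0 : ℝ) 1) :
    overlapArea n x₀ (2 * a) (2 * b) =
      (∫ t in (2 * ((a : ℝ) - b - p) - 1)..(2 * ((a : ℝ) - b - p) - 1 + 2 * n * x₀), hat t) /
        (2 * n ^ 3) := by
  have hsq : n ^ 2 = 2 * (p * n) + n := by subst hn; ring
  have hc : ((2 * a : ℕ) : ℝ) - (2 * b : ℕ) - n = 2 * ((a : ℝ) - b - p) - 1 := by
    rw [hn]; push_cast; ring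
  rw [overlapArea_eq _ (by omega) hx₀, hc]

lemma overlapArea_two_mul_le (hn : n = 2 * p + 1) (ha : a < p * n) (b : ℕ) {x₀ : ℝ}
    (hx₀ : x₀ ∈ Icc (0 : ℝ) 1) :
    overlapArea n x₀ (2 * a) (2 * b) ≤ 1 / (2 * n ^ 3) := by
  rw [overlapArea_two_mul hn ha b hx₀]
  gcongr
  exact intervalIntegral_hat_le_one (by nlinarith [hx₀.1])

lemma overlapArea_two_mul_eq_zero (hn : n = 2 * p + 1) (ha : a < p * n) (b : ℕ) {x₀ : ℝ}
    (hx₀ : x₀ ∈ Icc (0 : ℝ) 1) (h : b + p < a ∨ a + ⌊n * x₀⌋₊ < b + p) :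
    overlapArea n x₀ (2 * a) (2 * b) = 0 := by
  have hq := Nat.lt_floor_add_one ((n : ℝ) * x₀)
  rw [overlapArea_two_mul hn ha b hx₀, intervalIntegral_hat_eq_zero (by nlinarith [hx₀.1]),
    zero_div]
  rcases h with h | h
  · left
    have : (b : ℝ) + p + 1 ≤ a := by exact_mod_cast h
    linarith
  · right
    have : (a : ℝ) + ⌊n * x₀⌋₊ + 1 ≤ b + p := by exact_mod_cast h
    linarith

lemma overlapArea_two_mul_eq (hn : n = 2 * p + 1) (ha : a < p * n) (b : ℕ) {x₀ : ℝ}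
    (hx₀ : x₀ ∈ Icc (0 : ℝ) 1) (h₁ : a ≤ b + p) (h₂ : b + p < a + ⌊n * x₀⌋₊) :
    overlapArea n x₀ (2 * a) (2 * b) = 1 / (2 * n ^ 3) := by
  have hq := Nat.floor_le (by positivity [hx₀.1] : 0 ≤ (n : ℝ) * x₀)
  have h₁' : (a : ℝ) ≤ b + p := by exact_mod_cast h₁
  have h₂' : (b : ℝ) + p + 1 ≤ a + ⌊n * x₀⌋₊ := by exact_mod_cast h₂
  rw [overlapArea_two_mul hn ha b hx₀, intervalIntegral_hat_eq_one (by linarith) (by linarith)]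

lemma le_sum_overlapArea (hodd : Odd n) {x₀ : ℝ} (hx₀ : x₀ ∈ Icc (0 : ℝ) 1) :
    ((n : ℝ) - 1) * (n - 2) / 2 * (⌊(n : ℝ) * x₀⌋₊ * (1 / (2 * n ^ 3))) ≤
      ∑ i ∈ Sn n, ∑ j ∈ Sn n, overlapArea n x₀ i j := by
  obtain ⟨p, hp⟩ := hodd
  have hqn : ⌊(n : ℝ) * x₀⌋₊ ≤ n := Nat.floor_le_of_le (by nlinarith [hx₀.1, hx₀.2])
  have hnp : n ≤ p * n + 1 := by subst hp; nlinarith [Nat.le_mul_self p]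
  have hA : ((p * n + 1 - n : ℕ) : ℝ) = (n - 1) * (n - 2) / 2 := by
    rw [Nat.cast_sub hnp, hp]; push_cast; ring
  simp only [sum_Sn_eq hp, ← hA]
  exact le_sum_range_sum_range (fun a _ b _ => ENNReal.toReal_nonneg)
    (fun a ha b _ => overlapArea_two_mul_eq hp ha b hx₀) (by omega) (by omega)

lemma sum_overlapArea_le (hodd : Odd n) {x₀ : ℝ} (hx₀ : x₀ ∈ Icc (0 : ℝ) 1) :
    ∑ i ∈ Sn n, ∑ j ∈ Sn n, overlapArea n x₀ i j ≤
      n * ((n : ℝ) - 1) / 2 * ((⌊(n : ℝ) * x₀⌋₊ + 1) * (1 / (2 * n ^ 3))) := by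
  obtain ⟨p, hp⟩ := hodd
  have hN : ((p * n : ℕ) : ℝ) = n * (n - 1) / 2 := by rw [hp]; push_cast; ring
  simp only [sum_Sn_eq hp, ← hN]
  exact sum_range_sum_range_le (by positivity) (fun a ha b _ => overlapArea_two_mul_le hp ha b hx₀)
    (fun a ha b _ => overlapArea_two_mul_eq_zero hp ha b hx₀)

end Odd

theorem stmt7_general (n : ℕ) (hodd : Odd n) (x₀ : ℝ) (hx₀ : x₀ ∈ Icc (0 : ℝ) 1) :
    x₀ / 4 * (1 - 3 / n + 2 / n ^ 2) - 1 / (4 * n) ≤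
      (∑ i ∈ Sn n, ∑ j ∈ Sn n,
        (volume (Q n i ∩ R n j ∩ Icc (0 : ℝ) x₀ ×ˢ Icc (0 : ℝ) 1)).toReal) ∧
    (∑ i ∈ Sn n, ∑ j ∈ Sn n,
        (volume (Q n i ∩ R n j ∩ Icc (0 : ℝ) x₀ ×ˢ Icc (0 : ℝ) 1)).toReal) ≤
      x₀ / 4 * (1 - 3 / (2 * n) + 3 / (4 * n ^ 2)) + 3 / n := by
  have hn : (1 : ℝ) ≤ n := by exact_mod_cast hodd.pos
  have hn₂ : (0 : ℝ) ≤ (n - 1) * (n - 2) := by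
    rcases Nat.lt_or_ge n 2 with h | h
    · obtain rfl : n = 1 := by have := hodd.pos; omega
      norm_num
    · have : (2 : ℝ) ≤ n := by exact_mod_cast h
      nlinarith
  have hq₁ : (⌊(n : ℝ) * x₀⌋₊ : ℝ) ≤ n * x₀ := Nat.floor_le (by positivity [hx₀.1])
  have hq₂ := Nat.lt_floor_add_one ((n : ℝ) * x₀)
  refine ⟨le_trans ?_ (le_sum_overlapArea hodd hx₀), (sum_overlapArea_le hodd hx₀).trans ?_⟩
  · rw [← sub_nonneg]
    have key : (n - 1) * (n - 2) / 2 * (⌊(n : ℝ) * x₀⌋₊ * (1 / (2 * n ^ 3))) -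
        (x₀ / 4 * (1 - 3 / n + 2 / n ^ 2) - 1 / (4 * n)) =
        ((n - 1) * (n - 2) * (⌊(n : ℝ) * x₀⌋₊ + 1 - n * x₀) + 3 * n - 2) / (4 * n ^ 3) := by
      field_simp; ring
    rw [key]
    exact div_nonneg (by nlinarith) (by positivity)
  · rw [← sub_nonneg]
    have key : x₀ / 4 * (1 - 3 / (2 * n) + 3 / (4 * n ^ 2)) + 3 / n -
        n * (n - 1) / 2 * ((⌊(n : ℝ) * x₀⌋₊ + 1) * (1 / (2 * n ^ 3))) =
        (x₀ * (4 * n ^ 3 - 6 * n ^ 2 + 3 * n) + 48 * n ^ 2 -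
          4 * n * (n - 1) * (⌊(n : ℝ) * x₀⌋₊ + 1)) / (16 * n ^ 3) := by
      field_simp; ring
    rw [key]
    refine div_nonneg ?_ (by positivity)
    nlinarith [mul_le_mul_of_nonneg_left hq₁ (by nlinarith : (0 : ℝ) ≤ 4 * n * (n - 1)),
      hx₀.1, hx₀.2]

theorem stmt7 (n : ℕ) (hn3 : 3 ≤ n) (hodd : Odd n) (x₀ : ℝ) (hx₀ : x₀ ∈ Icc (0 : ℝ) 1) :
    x₀ / 4 * (1 - 3 / n + 2 / n ^ 2) - 1 / (4 * n) ≤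
      (∑ i ∈ Sn n, ∑ j ∈ Sn n,
        (volume (Q n i ∩ R n j ∩ Icc (0 : ℝ) x₀ ×ˢ Icc (0 : ℝ) 1)).toReal) ∧
    (∑ i ∈ Sn n, ∑ j ∈ Sn n,
        (volume (Q n i ∩ R n j ∩ Icc (0 : ℝ) x₀ ×ˢ Icc (0 : ℝ) 1)).toReal) ≤
      x₀ / 4 * (1 - 3 / (2 * n) + 3 / (4 * n ^ 2)) + 3 / n :=
  stmt7_general n hodd x₀ hx₀
end

section
/- Assuming the existence of a Nikodym set, there exists a family of closed segments (I_t)_{t∈T}, each joining a point (0,a) to a point (1,b) within the unit square [0,1]², such that ⋃_t I_t contains {0} × [0,1] and λ²(⋃_t I_t) = 0. -/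
/-!
Fubini gives a vertical line `x = x₀` meeting the null set `N = ⋃ t, l t \ {w t}` in a null set.
The Nikodym line through `(x₀, y)` therefore cannot be vertical, so it is the graph of
`u ↦ y + (u - x₀) m(y)`, and it lies in `N` off `(x₀, y)`. Shifting it horizontally by `-x₀` and
shearing it by the integer `⌊y + m(y)⌋` turns its piece over `[0, 1]` into the segment from `(0, y)`
to `(1, fract (y + m(y)))`, whose endpoints lie in `[0, 1]`. Translations and shears preserve
Lebesgue measure, so the union of these segments lies in countably many null sets and the two
lines `x = 0`, `x = 1`.
-/

open MeasureTheory Set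

/-- A line in the plane: an affine line `{p + s • v : s ∈ ℝ}` with `v ≠ 0`. -/
def IsLine (l : Set (ℝ × ℝ)) : Prop :=
  ∃ p v : ℝ × ℝ, v ≠ 0 ∧ l = {q | ∃ s : ℝ, q = p + s • v}

theorem IsLine.exists_dir_of_mem {l : Set (ℝ × ℝ)} (hl : IsLine l) {q : ℝ × ℝ} (hq : q ∈ l) :
    ∃ v : ℝ × ℝ, v ≠ 0 ∧ ∀ s : ℝ, q + s • v ∈ l := by
  obtain ⟨p, v, hv, rfl⟩ := hl
  obtain ⟨s₀, rfl⟩ := hq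
  exact ⟨v, hv, fun s => ⟨s₀ + s, by rw [add_smul, add_assoc]⟩⟩

theorem IsLine.vertical_or_graph {l : Set (ℝ × ℝ)} (hl : IsLine l) {x y : ℝ} (hxy : (x, y) ∈ l) :
    (∀ z, (x, z) ∈ l) ∨ ∃ m : ℝ, ∀ u, (x + u, y + u * m) ∈ l := by
  obtain ⟨⟨v₁, v₂⟩, hv, hmem⟩ := hl.exists_dir_of_mem hxy
  by_cases hv₁ : v₁ = 0
  · have hv₂ : v₂ ≠ 0 := fun h => hv (by rw [hv₁, h, Prod.mk_zero_zero])
    refine Or.inl fun z => ?_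
    convert hmem ((z - y) / v₂) using 1
    simp only [hv₁, Prod.smul_mk, Prod.mk_add_mk, smul_eq_mul, mul_zero, add_zero]
    rw [div_mul_cancel₀ _ hv₂, add_sub_cancel]
  · refine Or.inr ⟨v₂ / v₁, fun u => ?_⟩
    convert hmem (u / v₁) using 1
    simp only [Prod.smul_mk, Prod.mk_add_mk, smul_eq_mul, Prod.mk.injEq]
    constructor <;> field_simp

theorem IsLine.exists_slope_of_diff_subset {l N : Set (ℝ × ℝ)} (hl : IsLine l) {x y : ℝ}
    (hxy : (x, y) ∈ l) (hlN : l \ {(x, y)} ⊆ N) (hN : volume (Prod.mk x ⁻¹' N) = 0) :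
    ∃ m : ℝ, ∀ u ≠ 0, (x + u, y + u * m) ∈ N := by
  rcases hl.vertical_or_graph hxy with hvert | ⟨m, hm⟩
  · have hray : Ioi y ⊆ Prod.mk x ⁻¹' N := fun z hz =>
      hlN ⟨hvert z, fun h => hz.ne' (Prod.ext_iff.1 h).2⟩
    simpa using measure_mono_null hray hN
  · refine ⟨m, fun u hu => hlN ⟨hm u, fun h => hu ?_⟩⟩
    simpa using (Prod.ext_iff.1 h).1

theorem exists_volume_slice_eq_zero {N : Set (ℝ × ℝ)} (hN : volume N = 0) :
    ∃ x : ℝ, volume (Prod.mk x ⁻¹' N) = 0 := by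
  rw [Measure.volume_eq_prod] at hN
  exact (Measure.measure_ae_null_of_prod_null hN).exists

theorem measurePreserving_shear_s13 (a c : ℝ) :
    MeasurePreserving (fun q : ℝ × ℝ => (q.1 + a, q.2 + c * q.1)) := by
  rw [Measure.volume_eq_prod]
  exact (measurePreserving_add_right volume a).skew_product (g := fun x y => y + c * x)
    (by fun_prop) (ae_of_all _ fun x => map_add_right_eq_self volume (c * x))

theorem volume_prod_univ_zero_one_eq_zero :
    volume (({0, 1} : Set ℝ) ×ˢ (univ : Set ℝ)) = 0 := by
  rw [Measure.volume_eq_prod, Measure.prod_prod, (toFinite _).measure_zero, zero_mul]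

theorem volume_iUnion_segment_fract_eq_zero {ι : Type*} {N : Set (ℝ × ℝ)} (hN : volume N = 0)
    {x : ℝ} {a m : ι → ℝ} (hm : ∀ i, ∀ u ≠ 0, (x + u, a i + u * m i) ∈ N) :
    volume (⋃ i, segment ℝ ((0 : ℝ), a i) ((1 : ℝ), Int.fract (a i + m i))) = 0 := by
  have hshear (n : ℤ) : volume ((fun q : ℝ × ℝ => (q.1 + x, q.2 + n * q.1)) ⁻¹' N) = 0 :=
    (measurePreserving_shear_s13 x n).quasiMeasurePreserving.preimage_null hN
  refine measure_mono_null ?_ (measure_union_null volume_prod_univ_zero_one_eq_zero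
    (measure_iUnion_null hshear))
  simp only [iUnion_subset_iff, segment_eq_image, image_subset_iff]
  intro i θ _
  by_cases hθ : θ = 0 ∨ θ = 1
  · left
    rcases hθ with rfl | rfl <;> simp
  · right
    rw [not_or] at hθ
    refine mem_iUnion.2 ⟨⌊a i + m i⌋, ?_⟩
    rw [mem_preimage]
    convert hm i θ hθ.1 using 2
    · simp only [Prod.smul_mk, Prod.mk_add_mk, smul_eq_mul]
      ring
    · simp only [Prod.smul_mk, Prod.mk_add_mk, smul_eq_mul, ← Int.self_sub_floor]
      ring

theorem stmt13 (T : Type*) (l : T → Set (ℝ × ℝ)) (w : T → ℝ × ℝ)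
    (hline : ∀ t, IsLine (l t)) (hw : ∀ t, w t ∈ l t)
    (hsurj : Set.range w = Set.univ)
    (hnull : volume (⋃ t, l t \ {w t}) = 0) :
    ∃ (T' : Type) (a b : T' → ℝ),
      (∀ t, a t ∈ Icc (0 : ℝ) 1 ∧ b t ∈ Icc (0 : ℝ) 1) ∧
      ({0} : Set ℝ) ×ˢ Icc (0 : ℝ) 1 ⊆ ⋃ t, segment ℝ ((0 : ℝ), a t) ((1 : ℝ), b t) ∧
      volume (⋃ t, segment ℝ ((0 : ℝ), a t) ((1 : ℝ), b t)) = 0 := by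
  obtain ⟨x, hx⟩ := exists_volume_slice_eq_zero hnull
  have hslope (y : ℝ) : ∃ m : ℝ, ∀ u ≠ 0, (x + u, y + u * m) ∈ ⋃ t, l t \ {w t} := by
    obtain ⟨t, ht⟩ : (x, y) ∈ range w := hsurj ▸ mem_univ _
    exact (hline t).exists_slope_of_diff_subset (ht ▸ hw t)
      (ht ▸ subset_iUnion (fun t => l t \ {w t}) t) hx
  choose m hm using hslope
  refine ⟨Icc (0 : ℝ) 1, (↑), fun y => Int.fract (y + m y), fun y =>
    ⟨y.2, Int.fract_nonneg _, (Int.fract_lt_one _).le⟩, ?_,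
    volume_iUnion_segment_fract_eq_zero hnull fun y => hm y⟩
  rintro ⟨_, y⟩ ⟨rfl, hy⟩
  exact mem_iUnion.2 ⟨⟨y, hy⟩, left_mem_segment ℝ _ _⟩
end
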